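/- Let α > 0, let κ > 1, let m : [0,α] → ℝ be continuous, and let Φ(ζ) = ζ^κ m(ζ) for ζ ∈ (0,α]. Let G be the kernel associated with α and Φ, and define K(θ) = θ² (G(θ) + G(−θ)) for θ ∈ (0,1). Then θ (G(θ) + G(−θ)) → 0 as θ → 0⁺; consequently K extends continuously to [0,1) with K(0) = 0, and this extension is differentiable at θ = 0 with K'(0) = 0. -/

import Mathlib

open MeasureTheory Set Filter Topology

/-- The kernel G associated with α and Φ:
G(θ) = (α/√π) ∫_{α|θ|}^{α} (ζ² - α²θ²)^{-1/2}
         exp(-α²ζ²(1-θ)²/(4(ζ² - α²θ²))) Φ(ζ)/ζ² dζ. -/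
noncomputable def kernelG (α : ℝ) (Φ : ℝ → ℝ) (θ : ℝ) : ℝ :=
  (α / Real.sqrt Real.pi) *
    ∫ ζ in (α * |θ|)..α,
      (1 / Real.sqrt (ζ ^ 2 - α ^ 2 * θ ^ 2)) *
        Real.exp (-(α ^ 2 * ζ ^ 2 * (1 - θ) ^ 2) / (4 * (ζ ^ 2 - α ^ 2 * θ ^ 2))) *
        (Φ ζ / ζ ^ 2)

/-!
Writing `Φ(ζ)/ζ² = ζ^(κ-2) m(ζ)` and bounding the Gaussian factor by `1`, `|G(±θ)|` is at most a
constant times `(θ^(κ-2) + 1) ∫_{αθ}^{α} (ζ² - α²θ²)^{-1/2} dζ = (θ^(κ-2) + 1) arcosh(1/θ)`, and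
`arcosh(1/θ) ≤ log(2/θ)`. Since `κ > 1`, `θ (G(θ) + G(-θ)) → 0`; this is also the difference
quotient of `K` at `0`, which gives `K'(0) = 0` and continuity at `0`.

Away from `θ = 0` the bound `exp(-y) ≤ 1/y` turns the Gaussian factor into
`4 (ζ² - α²θ²) / (α²ζ²(1-θ)²)`, which cancels the singularity; the integrand is then bounded
locally uniformly in `θ ∈ (-1, 1) \ {0}`, and dominated convergence gives continuity of `G`.
-/

open Real

lemma hasDerivAt_arcosh_div {a ζ : ℝ} (ha : 0 < a) (hζ : a < ζ) :
    HasDerivAt (fun x => arcosh (x / a)) (√(ζ ^ 2 - a ^ 2))⁻¹ ζ := by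
  refine ((hasDerivAt_arcosh ((one_lt_div ha).2 hζ)).comp ζ
    ((hasDerivAt_id ζ).div_const a)).congr_deriv ?_
  have hs : √((ζ / a) ^ 2 - 1) = √(ζ ^ 2 - a ^ 2) / a := by
    rw [div_pow, div_sub_one (by positivity), sqrt_div' _ (sq_nonneg a), sqrt_sq ha.le]
  rw [hs]
  field_simp

lemma continuousOn_arcosh_div {a b : ℝ} (ha : 0 < a) :
    ContinuousOn (fun x => arcosh (x / a)) (Icc a b) :=
  continuousOn_arcosh.comp (by fun_prop) fun x hx => by simpa [le_div_iff₀ ha] using hx.1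

lemma intervalIntegrable_inv_sqrt_sq_sub_sq {a b : ℝ} (ha : 0 < a) (hab : a ≤ b) :
    IntervalIntegrable (fun ζ => (√(ζ ^ 2 - a ^ 2))⁻¹) volume a b := by
  refine intervalIntegral.intervalIntegrable_deriv_of_nonneg (g := fun x => arcosh (x / a))
    (by simpa [uIcc_of_le hab] using continuousOn_arcosh_div ha) (fun ζ hζ => ?_)
    fun ζ _ => by positivity
  rw [min_eq_left hab] at hζ
  exact hasDerivAt_arcosh_div ha hζ.1

lemma integral_inv_sqrt_sq_sub_sq {a b : ℝ} (ha : 0 < a) (hab : a ≤ b) :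
    ∫ ζ in a..b, (√(ζ ^ 2 - a ^ 2))⁻¹ = arcosh (b / a) := by
  rw [intervalIntegral.integral_eq_sub_of_hasDerivAt_of_le hab (continuousOn_arcosh_div ha)
    (fun ζ hζ => hasDerivAt_arcosh_div ha hζ.1) (intervalIntegrable_inv_sqrt_sq_sub_sq ha hab),
    div_self ha.ne', arcosh_zero, sub_zero]

lemma arcosh_le_log_two_mul {x : ℝ} (hx : 1 ≤ x) : arcosh x ≤ log (2 * x) := by
  have hs : √(x ^ 2 - 1) ≤ x := (sqrt_le_left (by linarith)).2 (by linarith)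
  exact log_le_log (by positivity) (by linarith)

noncomputable def kernelIntegrand (α : ℝ) (Φ : ℝ → ℝ) (θ ζ : ℝ) : ℝ :=
  (1 / √(ζ ^ 2 - α ^ 2 * θ ^ 2)) *
    exp (-(α ^ 2 * ζ ^ 2 * (1 - θ) ^ 2) / (4 * (ζ ^ 2 - α ^ 2 * θ ^ 2))) * (Φ ζ / ζ ^ 2)

section kernelIntegrand

variable {α : ℝ} {Φ : ℝ → ℝ} {θ ζ : ℝ}

lemma kernelG_eq_integral_kernelIntegrand :
    kernelG α Φ θ = α / √π * ∫ ζ in α * |θ|..α, kernelIntegrand α Φ θ ζ :=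
  rfl

/-- Below the lower limit `α|θ|` the integrand vanishes: there `√` of a negative number is `0`,
and `1 / 0 = 0`. -/
lemma kernelIntegrand_eq_zero (h : ζ ^ 2 ≤ α ^ 2 * θ ^ 2) : kernelIntegrand α Φ θ ζ = 0 := by
  simp [kernelIntegrand, sqrt_eq_zero_of_nonpos (sub_nonpos.2 h)]

lemma abs_kernelIntegrand_le_div_sqrt :
    |kernelIntegrand α Φ θ ζ| ≤ |Φ ζ / ζ ^ 2| / √(ζ ^ 2 - α ^ 2 * θ ^ 2) := by
  rcases le_or_gt (ζ ^ 2 - α ^ 2 * θ ^ 2) 0 with hs | hs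
  · rw [kernelIntegrand_eq_zero (sub_nonpos.1 hs), abs_zero]
    positivity
  have hexp : exp (-(α ^ 2 * ζ ^ 2 * (1 - θ) ^ 2) / (4 * (ζ ^ 2 - α ^ 2 * θ ^ 2))) ≤ 1 :=
    exp_le_one_iff.2 (div_nonpos_of_nonpos_of_nonneg (by simp only [neg_nonpos]; positivity)
      (by positivity))
  rw [kernelIntegrand, abs_mul, abs_mul, abs_of_nonneg (exp_nonneg _),
    abs_of_nonneg (one_div_nonneg.2 (sqrt_nonneg _))]
  calc _ ≤ 1 / √(ζ ^ 2 - α ^ 2 * θ ^ 2) * 1 * |Φ ζ / ζ ^ 2| := by gcongr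
    _ = _ := by ring

lemma abs_kernelIntegrand_le_sqrt_div (hα : α ≠ 0) (hζ : ζ ≠ 0) (hθ : θ ≠ 1) :
    |kernelIntegrand α Φ θ ζ| ≤
      4 * √(ζ ^ 2 - α ^ 2 * θ ^ 2) / (α ^ 2 * ζ ^ 2 * (1 - θ) ^ 2) * |Φ ζ / ζ ^ 2| := by
  rcases le_or_gt (ζ ^ 2 - α ^ 2 * θ ^ 2) 0 with hs | hs
  · rw [kernelIntegrand_eq_zero (sub_nonpos.1 hs), abs_zero]
    positivity
  set s := ζ ^ 2 - α ^ 2 * θ ^ 2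
  set N := α ^ 2 * ζ ^ 2 * (1 - θ) ^ 2
  have hN : 0 < N := by have := sub_ne_zero.2 hθ.symm; positivity
  have hexp : exp (-N / (4 * s)) ≤ 4 * s / N := by
    have h := (mul_exp_neg_le_exp_neg_one (N / (4 * s))).trans (exp_le_one_iff.2 (by norm_num))
    rw [div_mul_eq_mul_div, div_le_one (by positivity)] at h
    rw [neg_div, le_div_iff₀ hN]
    linarith
  have hsq : 1 / √s * (4 * s / N) = 4 * √s / N := by
    field_simp
    rw [sq_sqrt hs.le]
  rw [kernelIntegrand, abs_mul, abs_mul, abs_of_nonneg (exp_nonneg _),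
    abs_of_nonneg (by positivity : 0 ≤ 1 / √s), ← hsq]
  gcongr

lemma kernelG_eq_integral_zero (hα : 0 ≤ α) (hθ : |θ| ≤ 1) :
    kernelG α Φ θ = α / √π * ∫ ζ in 0..α, kernelIntegrand α Φ θ ζ := by
  have hαθ : α * |θ| ≤ α := mul_le_of_le_one_right hα hθ
  rw [kernelG_eq_integral_kernelIntegrand, intervalIntegral.integral_of_le hαθ,
    intervalIntegral.integral_of_le hα,
    setIntegral_eq_of_subset_of_forall_sdiff_eq_zero measurableSet_Ioc
      (Ioc_subset_Ioc_left (mul_nonneg hα (abs_nonneg θ)))]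
  rintro ζ ⟨⟨hζ0, hζα⟩, hζθ⟩
  have hζθ' : ζ ≤ α * |θ| := not_lt.1 fun h => hζθ ⟨h, hζα⟩
  refine kernelIntegrand_eq_zero ?_
  calc ζ ^ 2 ≤ (α * |θ|) ^ 2 := pow_le_pow_left₀ hζ0.le hζθ' 2
    _ = α ^ 2 * θ ^ 2 := by rw [mul_pow, sq_abs]

lemma abs_kernelG_le (hα : 0 < α) (hθ : θ ≠ 0) (hθ1 : |θ| < 1) {B : ℝ}
    (hB : ∀ ζ ∈ Ioc (α * |θ|) α, |Φ ζ / ζ ^ 2| ≤ B) :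
    |kernelG α Φ θ| ≤ α / √π * B * log (2 / |θ|) := by
  have ha : 0 < α * |θ| := by positivity
  have hαθ : α * |θ| < α := mul_lt_of_lt_one_right hα hθ1
  have hB0 : 0 ≤ B := (abs_nonneg _).trans (hB α ⟨hαθ, le_rfl⟩)
  have hsq : ∀ ζ, ζ ^ 2 - α ^ 2 * θ ^ 2 = ζ ^ 2 - (α * |θ|) ^ 2 := fun ζ => by
    rw [mul_pow, sq_abs]
  have hint : ‖∫ ζ in α * |θ|..α, kernelIntegrand α Φ θ ζ‖ ≤ B * arcosh |θ|⁻¹ := by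
    calc _ ≤ ∫ ζ in α * |θ|..α, B * (√(ζ ^ 2 - (α * |θ|) ^ 2))⁻¹ := by
          refine intervalIntegral.norm_integral_le_of_norm_le hαθ.le (ae_of_all _ fun ζ hζ => ?_)
            ((intervalIntegrable_inv_sqrt_sq_sub_sq ha hαθ.le).const_mul B)
          rw [norm_eq_abs, ← hsq, ← div_eq_mul_inv]
          exact abs_kernelIntegrand_le_div_sqrt.trans (by gcongr; exact hB ζ hζ)
      _ = B * arcosh |θ|⁻¹ := by
          rw [intervalIntegral.integral_const_mul, integral_inv_sqrt_sq_sub_sq ha hαθ.le,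
            div_mul_cancel_left₀ hα.ne']
  have harcosh : arcosh |θ|⁻¹ ≤ log (2 / |θ|) := by
    rw [div_eq_mul_inv]
    exact arcosh_le_log_two_mul (one_le_inv₀ (abs_pos.2 hθ) |>.2 hθ1.le)
  rw [kernelG_eq_integral_kernelIntegrand, abs_mul, abs_of_nonneg (by positivity), mul_assoc]
  gcongr
  exact hint.trans (by gcongr)

lemma continuousAt_kernelIntegrand (hζ : ζ ^ 2 ≠ α ^ 2 * θ ^ 2) :
    ContinuousAt (fun θ => kernelIntegrand α Φ θ ζ) θ := by
  rcases hζ.lt_or_gt with hlt | hgt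
  · refine (continuousAt_const (y := (0 : ℝ))).congr_of_eventuallyEq ?_
    filter_upwards [(continuous_const.mul (continuous_pow 2)).continuousAt.eventually
      (eventually_gt_nhds hlt)] with θ' hθ'
    exact kernelIntegrand_eq_zero hθ'.le
  · have hs : 0 < ζ ^ 2 - α ^ 2 * θ ^ 2 := sub_pos.2 hgt
    unfold kernelIntegrand
    fun_prop (disch := positivity)

lemma aestronglyMeasurable_kernelIntegrand (hΦ : ContinuousOn Φ (Ioc 0 α)) :
    AEStronglyMeasurable (kernelIntegrand α Φ θ) (volume.restrict (Ioc 0 α)) := by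
  have hq : ContinuousOn (fun ζ => Φ ζ / ζ ^ 2) (Ioc 0 α) :=
    hΦ.div (continuousOn_pow 2) fun ζ hζ => pow_ne_zero 2 hζ.1.ne'
  exact (Measurable.aestronglyMeasurable (by fun_prop)).mul
    (hq.aestronglyMeasurable measurableSet_Ioc)

lemma abs_kernelIntegrand_le_of_abs_mem_Ioo (hα : 0 < α) {c d M : ℝ} (hc : 0 < c) (hd : d < 1)
    (hM : ∀ ζ ∈ Icc (α * c) α, |Φ ζ / ζ ^ 2| ≤ M) (hcθ : c < |θ|) (hθd : |θ| < d)
    (hζ : ζ ∈ Ioc 0 α) :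
    |kernelIntegrand α Φ θ ζ| ≤ 4 * α / (α ^ 2 * (α * c) ^ 2 * (1 - d) ^ 2) * M := by
  obtain ⟨hζ0, hζα⟩ := hζ
  have hM0 : 0 ≤ M := (abs_nonneg _).trans (hM α ⟨by nlinarith [abs_nonneg θ], le_rfl⟩)
  rcases le_or_gt (ζ ^ 2) (α ^ 2 * θ ^ 2) with hζθ | hζθ
  · rw [kernelIntegrand_eq_zero hζθ, abs_zero]
    exact mul_nonneg (by positivity) hM0
  have hζc : α * c ≤ ζ := by
    have h : (α * |θ|) ^ 2 < ζ ^ 2 := by rwa [mul_pow, sq_abs]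
    have h' := (pow_lt_pow_iff_left₀ (by positivity) hζ0.le two_ne_zero).1 h
    nlinarith
  have hθ1 : θ ≠ 1 := by linarith [le_abs_self θ]
  refine (abs_kernelIntegrand_le_sqrt_div hα.ne' hζ0.ne' hθ1).trans ?_
  gcongr
  · exact (sqrt_le_sqrt (by nlinarith)).trans_eq (sqrt_sq hα.le)
  · exact (le_abs_self θ).trans hθd.le
  · exact hM ζ ⟨hζc, hζα⟩

lemma continuousAt_kernelG (hα : 0 < α) (hΦ : ContinuousOn Φ (Ioc 0 α)) (hθ : θ ≠ 0)
    (hθ1 : |θ| < 1) : ContinuousAt (kernelG α Φ) θ := by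
  obtain ⟨c, d, hc, hcθ, hθd, hd⟩ : ∃ c d : ℝ, 0 < c ∧ c < |θ| ∧ |θ| < d ∧ d < 1 :=
    ⟨|θ| / 2, (1 + |θ|) / 2, by positivity, by linarith [abs_pos.2 hθ], by linarith, by linarith⟩
  have hU : ∀ᶠ θ' in 𝓝 θ, c < |θ'| ∧ |θ'| < d :=
    continuous_abs.continuousAt.eventually (Ioo_mem_nhds hcθ hθd)
  have hq : ContinuousOn (fun ζ => Φ ζ / ζ ^ 2) (Icc (α * c) α) :=
    (hΦ.mono (Icc_subset_Ioc (by positivity) le_rfl)).div (continuousOn_pow 2)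
      fun ζ hζ => pow_ne_zero 2 ((mul_pos hα hc).trans_le hζ.1).ne'
  obtain ⟨M, hM⟩ := isCompact_Icc.exists_bound_of_continuousOn hq
  have heq : kernelG α Φ =ᶠ[𝓝 θ] fun θ' => α / √π * ∫ ζ in 0..α, kernelIntegrand α Φ θ' ζ := by
    filter_upwards [hU] with θ' hθ'
    exact kernelG_eq_integral_zero hα.le (hθ'.2.trans hd).le
  refine ContinuousAt.congr_of_eventuallyEq (continuousAt_const.mul ?_) heq
  refine intervalIntegral.continuousAt_of_dominated_interval
    (bound := fun _ => 4 * α / (α ^ 2 * (α * c) ^ 2 * (1 - d) ^ 2) * M)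
    (Eventually.of_forall fun θ' => ?_) (hU.mono fun θ' hθ' => ae_of_all _ fun ζ hζ => ?_)
    intervalIntegrable_const ?_
  · rw [uIoc_of_le hα.le]
    exact aestronglyMeasurable_kernelIntegrand hΦ
  · rw [uIoc_of_le hα.le] at hζ
    exact abs_kernelIntegrand_le_of_abs_mem_Ioo hα hc hd hM hθ'.1 hθ'.2 hζ
  · filter_upwards [compl_mem_ae_iff.2 (measure_singleton (α * |θ|))] with ζ hζ hζα
    refine continuousAt_kernelIntegrand fun h => hζ ?_
    rw [uIoc_of_le hα.le] at hζα
    rw [← sq_abs θ, ← mul_pow] at h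
    exact (pow_left_inj₀ hζα.1.le (by positivity) two_ne_zero).1 h

end kernelIntegrand

lemma tendsto_rpow_mul_log_div_nhdsGT_zero {p c : ℝ} (hp : 0 < p) (hc : c ≠ 0) :
    Tendsto (fun θ => θ ^ p * log (c / θ)) (𝓝[>] 0) (𝓝 0) := by
  have hpow : Tendsto (fun θ : ℝ => θ ^ p) (𝓝[>] 0) (𝓝 0) :=
    ((continuous_rpow_const hp.le).tendsto' 0 0 (zero_rpow hp.ne')).mono_left nhdsWithin_le_nhds
  have h := (hpow.mul_const (log c)).sub (tendsto_log_mul_rpow_nhdsGT_zero hp)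
  rw [zero_mul, sub_zero] at h
  refine h.congr' ?_
  filter_upwards [self_mem_nhdsWithin] with θ (hθ : 0 < θ)
  rw [log_div hc hθ.ne']
  ring

lemma rpow_le_rpow_add_rpow {a b x : ℝ} (ha : 0 < a) (hax : a ≤ x) (hxb : x ≤ b) (p : ℝ) :
    x ^ p ≤ a ^ p + b ^ p := by
  rcases le_total 0 p with hp | hp
  · exact (rpow_le_rpow (ha.le.trans hax) hxb hp).trans
      (le_add_of_nonneg_left (rpow_nonneg ha.le p))
  · exact (rpow_le_rpow_of_nonpos ha hax hp).trans
      (le_add_of_nonneg_right (rpow_nonneg (ha.le.trans (hax.trans hxb)) p))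

lemma abs_kernelG_rpow_mul_le {α κ M θ : ℝ} {m : ℝ → ℝ} (hα : 0 < α) (hθ : θ ≠ 0) (hθ1 : |θ| < 1)
    (hM : ∀ ζ ∈ Ioc 0 α, |m ζ| ≤ M) :
    |kernelG α (fun ζ => ζ ^ κ * m ζ) θ| ≤
      α / √π * (M * α ^ (κ - 2) * (|θ| ^ (κ - 2) + 1)) * log (2 / |θ|) := by
  refine abs_kernelG_le hα hθ hθ1 fun ζ ⟨hζθ, hζα⟩ => ?_
  have hζ : 0 < ζ := lt_of_le_of_lt (by positivity) hζθ
  have hpow : ζ ^ κ / ζ ^ 2 = ζ ^ (κ - 2) := by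
    rw [rpow_sub hζ, rpow_two]
  calc |ζ ^ κ * m ζ / ζ ^ 2| = ζ ^ (κ - 2) * |m ζ| := by
        rw [mul_div_right_comm, hpow, abs_mul, abs_of_nonneg (by positivity)]
    _ ≤ ((α * |θ|) ^ (κ - 2) + α ^ (κ - 2)) * M := by
        gcongr
        · exact rpow_le_rpow_add_rpow (by positivity) hζθ.le hζα _
        · exact hM ζ ⟨hζ, hζα⟩
    _ = M * α ^ (κ - 2) * (|θ| ^ (κ - 2) + 1) := by
        rw [mul_rpow hα.le (abs_nonneg θ)]
        ring

lemma tendsto_mul_kernelG_add_kernelG_neg {α κ : ℝ} {m : ℝ → ℝ} (hα : 0 < α) (hκ : 1 < κ)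
    (hm : ContinuousOn m (Icc 0 α)) :
    Tendsto (fun θ => θ * (kernelG α (fun ζ => ζ ^ κ * m ζ) θ +
      kernelG α (fun ζ => ζ ^ κ * m ζ) (-θ))) (𝓝[>] 0) (𝓝 0) := by
  obtain ⟨M, hM⟩ := isCompact_Icc.exists_bound_of_continuousOn hm
  have hM' : ∀ ζ ∈ Ioc 0 α, |m ζ| ≤ M := fun ζ hζ => hM ζ (Ioc_subset_Icc_self hζ)
  set C := 2 * (α / √π) * (M * α ^ (κ - 2))
  have hlim := ((tendsto_rpow_mul_log_div_nhdsGT_zero (sub_pos.2 hκ) two_ne_zero).add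
    (tendsto_rpow_mul_log_div_nhdsGT_zero one_pos two_ne_zero)).const_mul C
  rw [add_zero, mul_zero] at hlim
  refine squeeze_zero_norm' ?_ hlim
  filter_upwards [Ioo_mem_nhdsGT one_pos] with θ ⟨hθ0, hθ1⟩
  have hθ : |θ| = θ := abs_of_pos hθ0
  have hnθ : |-θ| = θ := by rw [abs_neg, hθ]
  have h1 := abs_kernelG_rpow_mul_le (κ := κ) hα hθ0.ne' (hθ.trans_lt hθ1) hM'
  have h2 := abs_kernelG_rpow_mul_le (κ := κ) hα (neg_ne_zero.2 hθ0.ne') (hnθ.trans_lt hθ1) hM'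
  rw [hθ] at h1
  rw [hnθ] at h2
  calc ‖θ * (kernelG α (fun ζ => ζ ^ κ * m ζ) θ + kernelG α (fun ζ => ζ ^ κ * m ζ) (-θ))‖
      ≤ θ * (|kernelG α (fun ζ => ζ ^ κ * m ζ) θ| + |kernelG α (fun ζ => ζ ^ κ * m ζ) (-θ)|) := by
        rw [norm_mul, norm_of_nonneg hθ0.le]
        gcongr
        exact abs_add_le _ _
    _ ≤ θ * (2 * (α / √π * (M * α ^ (κ - 2) * (θ ^ (κ - 2) + 1)) * log (2 / θ))) := by
        gcongr
        linarith
    _ = C * (θ ^ (κ - 1) * log (2 / θ) + θ ^ (1 : ℝ) * log (2 / θ)) := by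
        rw [rpow_one, show κ - 1 = κ - 2 + 1 by ring, rpow_add_one hθ0.ne']
        ring

/-- For Φ(ζ) = ζ^κ m(ζ) with κ > 1, θ(G(θ)+G(-θ)) → 0 as θ → 0⁺;
hence K(θ) = θ²(G(θ)+G(-θ)) extends continuously to [0,1) with K(0) = 0, and the
extension is differentiable at 0 with K'(0) = 0. -/
theorem kernelK_zero_and_deriv_zero
    (α κ : ℝ) (hα : 0 < α) (hκ : 1 < κ)
    (m : ℝ → ℝ) (hm : ContinuousOn m (Icc 0 α))
    (G Kex : ℝ → ℝ)
    (hG : G = kernelG α (fun ζ => ζ ^ κ * m ζ))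
    (hKex : Kex = fun θ => if θ = 0 then 0 else θ ^ 2 * (G θ + G (-θ))) :
    Tendsto (fun θ => θ * (G θ + G (-θ))) (nhdsWithin 0 (Ioi 0)) (nhds 0) ∧
    ContinuousOn Kex (Ico 0 1) ∧
    HasDerivWithinAt Kex 0 (Ici 0) 0 := by
  have hlim : Tendsto (fun θ => θ * (G θ + G (-θ))) (𝓝[>] 0) (𝓝 0) :=
    hG ▸ tendsto_mul_kernelG_add_kernelG_neg hα hκ hm
  have hderiv : HasDerivWithinAt Kex 0 (Ici 0) 0 := by
    rw [hasDerivWithinAt_iff_tendsto_slope, Ici_sdiff_left]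
    refine hlim.congr' ?_
    filter_upwards [self_mem_nhdsWithin] with θ (hθ : 0 < θ)
    rw [hKex, slope_def_field, if_neg hθ.ne', if_pos rfl, sub_zero, sub_zero, sq, mul_assoc,
      mul_div_cancel_left₀ _ hθ.ne']
  refine ⟨hlim, fun θ hθ => ?_, hderiv⟩
  rcases hθ.1.eq_or_lt with rfl | hθ0
  · exact hderiv.continuousWithinAt.mono Ico_subset_Ici_self
  have hΦ : ContinuousOn (fun ζ => ζ ^ κ * m ζ) (Ioc 0 α) :=
    (continuousOn_id.rpow_const fun ζ hζ => Or.inl hζ.1.ne').mul (hm.mono Ioc_subset_Icc_self)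
  have hθ1 : |θ| < 1 := (abs_of_pos hθ0).trans_lt hθ.2
  have hGθ : ContinuousAt (fun θ => G θ + G (-θ)) θ := hG ▸
    (continuousAt_kernelG hα hΦ hθ0.ne' hθ1).add
      ((continuousAt_kernelG hα hΦ (neg_ne_zero.2 hθ0.ne') (by rwa [abs_neg])).comp
        continuousAt_neg)
  refine (((continuousAt_id.pow 2).mul hGθ).congr_of_eventuallyEq ?_).continuousWithinAt
  filter_upwards [eventually_ne_nhds hθ0.ne'] with θ' hθ'
  simp only [hKex, if_neg hθ', Pi.mul_apply, Pi.pow_apply, id]
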